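/- Let |Ψ⟩ = sin(π/4)(cos(π/6) |01⟩ − sin(π/6) |11⟩) + cos(π/4) |10⟩ in ℂ² ⊗ ℂ², with measurement settings A_0 = B_0 = σ_z, A_1 = cos(2α) σ_z − sin(2α) σ_x with α = π/6, and B_1 = cos(2β) σ_z − sin(2β) σ_x with β = π/4. Then the CHSH winning probability w = (1/4) Σ_{x,y∈{0,1}} Σ_{a,b∈{0,1}: x·y ⊕ a ⊕ b = 1} P(a,b|x,y) equals 13/16 = 0.8125. -/

import Mathlib

open Matrix Kronecker

noncomputable section

/-- Pauli Z matrix. -/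
def σz : Matrix (Fin 2) (Fin 2) ℂ := !![1, 0; 0, -1]

/-- Pauli X matrix. -/
def σx : Matrix (Fin 2) (Fin 2) ℂ := !![0, 1; 1, 0]

/-- Outcome projector `Π_a^O = (I ± O)/2` of a binary observable `O`. -/
def projQ (a : Fin 2) (O : Matrix (Fin 2) (Fin 2) ℂ) : Matrix (Fin 2) (Fin 2) ℂ :=
  if a = 0 then (2⁻¹ : ℂ) • (1 + O) else (2⁻¹ : ℂ) • (1 - O)

/-- Expectation value `⟨ψ| M |ψ⟩` on the two-qubit space `ℂ² ⊗ ℂ²`,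
with vectors indexed by `Fin 2 × Fin 2` (so `|ab⟩` is the basis vector at `(a,b)`). -/
def expval (M : Matrix (Fin 2 × Fin 2) (Fin 2 × Fin 2) ℂ) (ψ : Fin 2 × Fin 2 → ℂ) : ℂ :=
  ∑ p, star (ψ p) * M.mulVec ψ p

/-- Born-rule correlation `P(a,b|x,y) = ⟨ψ| Π_a^{A} ⊗ Π_b^{B} |ψ⟩`
for measurement settings `A` (Alice) and `B` (Bob). -/
def corr (A B : Matrix (Fin 2) (Fin 2) ℂ) (a b : Fin 2) (ψ : Fin 2 × Fin 2 → ℂ) : ℂ :=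
  expval (projQ a A ⊗ₖ projQ b B) ψ

/-- Measurement observable `cos(2t) σ_z - sin(2t) σ_x`. -/
def obs (t : ℝ) : Matrix (Fin 2) (Fin 2) ℂ :=
  (Real.cos (2 * t) : ℂ) • σz - (Real.sin (2 * t) : ℂ) • σx

/-- CHSH winning probability with uniform inputs:
`w = (1/4) ∑_{x,y} ∑_{a,b : x·y ⊕ a ⊕ b = 1} P(a,b|x,y)` (arithmetic in `Fin 2`). -/
def chshWin (A B : Fin 2 → Matrix (Fin 2) (Fin 2) ℂ) (ψ : Fin 2 × Fin 2 → ℂ) : ℂ :=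
  (4⁻¹ : ℂ) * ∑ x : Fin 2, ∑ y : Fin 2, ∑ a : Fin 2, ∑ b : Fin 2,
    if x * y + a + b = 1 then corr (A x) (B y) a b ψ else 0

/-!
Writing each outcome projector as `(1 ± O)/2`, the marginal terms cancel in the CHSH sum and the
winning probability becomes `(4 ⟨Ψ|Ψ⟩ - (E₀₀ + E₀₁ + E₁₀ - E₁₁)) / 8` with correlators
`E_xy = ⟨Ψ| A_x ⊗ B_y |Ψ⟩`. The correlators are bilinear in the settings, so only
`⟨σ_i ⊗ σ_j⟩` for `i, j ∈ {z, x}` are needed; for the real state `Ψ` these are `-3/4, 1/2, √3/4, √3/2`.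
This gives `E = (-3/4, -1/2, -3/4, 1/2)` and `w = (4 + 5/2) / 8 = 13/16`.
-/

lemma expval_eq_dotProduct (M : Matrix (Fin 2 × Fin 2) (Fin 2 × Fin 2) ℂ) (ψ : Fin 2 × Fin 2 → ℂ) :
    expval M ψ = star ψ ⬝ᵥ M *ᵥ ψ := rfl

lemma expval_eq_sum (M : Matrix (Fin 2 × Fin 2) (Fin 2 × Fin 2) ℂ) (ψ : Fin 2 × Fin 2 → ℂ) :
    expval M ψ = ∑ i, ∑ j, ∑ k, ∑ l, star (ψ (i, j)) * M (i, j) (k, l) * ψ (k, l) := by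
  simp only [expval, mulVec, dotProduct, Fintype.sum_prod_type, Finset.mul_sum, mul_assoc]

lemma expval_add (M N : Matrix (Fin 2 × Fin 2) (Fin 2 × Fin 2) ℂ) (ψ : Fin 2 × Fin 2 → ℂ) :
    expval (M + N) ψ = expval M ψ + expval N ψ := by
  simp only [expval_eq_dotProduct, add_mulVec, dotProduct_add]

lemma expval_smul (c : ℂ) (M : Matrix (Fin 2 × Fin 2) (Fin 2 × Fin 2) ℂ) (ψ : Fin 2 × Fin 2 → ℂ) :
    expval (c • M) ψ = c * expval M ψ := by
  simp only [expval_eq_dotProduct, smul_mulVec, dotProduct_smul, smul_eq_mul]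

lemma projQ_eq (a : Fin 2) (O : Matrix (Fin 2) (Fin 2) ℂ) :
    projQ a O = (2⁻¹ : ℂ) • (1 + (-1 : ℂ) ^ (a : ℕ) • O) := by
  fin_cases a <;> simp [projQ, sub_eq_add_neg]

lemma corr_eq (A B : Matrix (Fin 2) (Fin 2) ℂ) (a b : Fin 2) (ψ : Fin 2 × Fin 2 → ℂ) :
    corr A B a b ψ = 4⁻¹ * (expval 1 ψ + (-1) ^ (a : ℕ) * expval (A ⊗ₖ 1) ψ
      + (-1) ^ (b : ℕ) * expval (1 ⊗ₖ B) ψ + (-1) ^ ((a : ℕ) + b) * expval (A ⊗ₖ B) ψ) := by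
  simp only [corr, projQ_eq, smul_kronecker, kronecker_smul, add_kronecker, kronecker_add,
    one_kronecker_one, expval_add, expval_smul]
  ring

lemma chshWin_eq (A B : Fin 2 → Matrix (Fin 2) (Fin 2) ℂ) (ψ : Fin 2 × Fin 2 → ℂ) :
    chshWin A B ψ = (4 * expval 1 ψ - (expval (A 0 ⊗ₖ B 0) ψ + expval (A 0 ⊗ₖ B 1) ψ
      + expval (A 1 ⊗ₖ B 0) ψ - expval (A 1 ⊗ₖ B 1) ψ)) / 8 := by
  simp only [chshWin, Fin.sum_univ_two, corr_eq, Fin.isValue, Fin.val_zero, Fin.val_one,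
    Fin.reduceAdd, Fin.reduceMul, zero_mul, zero_add, mul_one, zero_ne_one, ↓reduceIte]
  ring

lemma expval_obs_kronecker (t : ℝ) (N : Matrix (Fin 2) (Fin 2) ℂ) (ψ : Fin 2 × Fin 2 → ℂ) :
    expval (obs t ⊗ₖ N) ψ
      = Real.cos (2 * t) * expval (σz ⊗ₖ N) ψ - Real.sin (2 * t) * expval (σx ⊗ₖ N) ψ := by
  simp only [obs, sub_eq_add_neg, ← neg_smul, add_kronecker, smul_kronecker, expval_add,
    expval_smul, neg_mul]

lemma expval_kronecker_obs (M : Matrix (Fin 2) (Fin 2) ℂ) (t : ℝ) (ψ : Fin 2 × Fin 2 → ℂ) :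
    expval (M ⊗ₖ obs t) ψ
      = Real.cos (2 * t) * expval (M ⊗ₖ σz) ψ - Real.sin (2 * t) * expval (M ⊗ₖ σx) ψ := by
  simp only [obs, sub_eq_add_neg, ← neg_smul, kronecker_add, kronecker_smul, expval_add,
    expval_smul, neg_mul]

def class2bState : Fin 2 × Fin 2 → ℂ := fun p =>
  if p = (0, 1) then (Real.sin (Real.pi / 4) * Real.cos (Real.pi / 6) : ℂ)
  else if p = (1, 1) then (-(Real.sin (Real.pi / 4) * Real.sin (Real.pi / 6)) : ℂ)
  else if p = (1, 0) then (Real.cos (Real.pi / 4) : ℂ) else 0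

section

open Real

lemma expval_obs_pi_div_six_kronecker (N : Matrix (Fin 2) (Fin 2) ℂ) (ψ : Fin 2 × Fin 2 → ℂ) :
    expval (obs (π / 6) ⊗ₖ N) ψ = 1 / 2 * expval (σz ⊗ₖ N) ψ - √3 / 2 * expval (σx ⊗ₖ N) ψ := by
  rw [expval_obs_kronecker, show 2 * (π / 6) = π / 3 by ring, cos_pi_div_three, sin_pi_div_three]
  push_cast
  ring

lemma expval_kronecker_obs_pi_div_four (M : Matrix (Fin 2) (Fin 2) ℂ) (ψ : Fin 2 × Fin 2 → ℂ) :
    expval (M ⊗ₖ obs (π / 4)) ψ = -expval (M ⊗ₖ σx) ψ := by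
  rw [expval_kronecker_obs, show 2 * (π / 4) = π / 2 by ring, cos_pi_div_two, sin_pi_div_two]
  push_cast
  ring

lemma class2bState_apply :
    class2bState (0, 0) = 0 ∧ class2bState (0, 1) = √2 * √3 / 4 ∧
      class2bState (1, 0) = √2 / 2 ∧ class2bState (1, 1) = -(√2 / 4) := by
  refine ⟨rfl, ?_, ?_, ?_⟩ <;>
    simp [class2bState, sin_pi_div_four, cos_pi_div_four, cos_pi_div_six, sin_pi_div_six] <;> ring

/-- The coefficients are the entries of the density matrix `|Ψ⟩⟨Ψ|`. -/
lemma expval_class2bState (M : Matrix (Fin 2 × Fin 2) (Fin 2 × Fin 2) ℂ) :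
    expval M class2bState = 3 / 8 * M (0, 1) (0, 1) + 1 / 2 * M (1, 0) (1, 0)
      + 1 / 8 * M (1, 1) (1, 1) + √3 / 4 * (M (0, 1) (1, 0) + M (1, 0) (0, 1))
      - √3 / 8 * (M (0, 1) (1, 1) + M (1, 1) (0, 1))
      - 1 / 4 * (M (1, 0) (1, 1) + M (1, 1) (1, 0)) := by
  obtain ⟨h00, h01, h10, h11⟩ := class2bState_apply
  simp only [expval_eq_sum, Fin.sum_univ_two, h00, h01, h10, h11, RCLike.star_def, map_zero,
    map_neg, map_div₀, map_mul, map_ofNat, Complex.conj_ofReal]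
  ring_nf
  simp only [← Complex.ofReal_pow, sq_sqrt, Nat.ofNat_nonneg, Complex.ofReal_ofNat]
  ring

lemma expval_one_class2bState : expval 1 class2bState = 1 := by
  norm_num [expval_class2bState, one_apply]

lemma expval_σz_kronecker_σz_class2bState : expval (σz ⊗ₖ σz) class2bState = -3 / 4 := by
  norm_num [expval_class2bState, σz]

lemma expval_σz_kronecker_σx_class2bState : expval (σz ⊗ₖ σx) class2bState = 1 / 2 := by
  norm_num [expval_class2bState, σz, σx]

lemma expval_σx_kronecker_σz_class2bState : expval (σx ⊗ₖ σz) class2bState = √3 / 4 := by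
  norm_num [expval_class2bState, σz, σx]
  ring

lemma expval_σx_kronecker_σx_class2bState : expval (σx ⊗ₖ σx) class2bState = √3 / 2 := by
  norm_num [expval_class2bState, σx]
  ring

lemma ofReal_sqrt_three_sq : ((√3 : ℝ) : ℂ) ^ 2 = 3 := by
  exact_mod_cast sq_sqrt (by norm_num : (0 : ℝ) ≤ 3)

lemma expval_σz_kronecker_obs_pi_div_four_class2bState :
    expval (σz ⊗ₖ obs (π / 4)) class2bState = -1 / 2 := by
  rw [expval_kronecker_obs_pi_div_four, expval_σz_kronecker_σx_class2bState]
  ring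

lemma expval_obs_pi_div_six_kronecker_σz_class2bState :
    expval (obs (π / 6) ⊗ₖ σz) class2bState = -3 / 4 := by
  rw [expval_obs_pi_div_six_kronecker, expval_σz_kronecker_σz_class2bState,
    expval_σx_kronecker_σz_class2bState]
  linear_combination (-1 / 8 : ℂ) * ofReal_sqrt_three_sq

lemma expval_obs_pi_div_six_kronecker_obs_pi_div_four_class2bState :
    expval (obs (π / 6) ⊗ₖ obs (π / 4)) class2bState = 1 / 2 := by
  rw [expval_obs_pi_div_six_kronecker, expval_kronecker_obs_pi_div_four,
    expval_kronecker_obs_pi_div_four, expval_σz_kronecker_σx_class2bState,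
    expval_σx_kronecker_σx_class2bState]
  linear_combination (1 / 4 : ℂ) * ofReal_sqrt_three_sq

end

/-- For the state
`|Ψ⟩ = sin(π/4)(cos(π/6) |01⟩ - sin(π/6) |11⟩) + cos(π/4) |10⟩` with settings
`A_0 = B_0 = σ_z`, `A_1 = cos 2α σ_z - sin 2α σ_x` with `α = π/6`, and
`B_1 = cos 2β σ_z - sin 2β σ_x` with `β = π/4`, the CHSH winning probability
equals `13/16 = 0.8125` (the maximal CHSH value in class `Q_{2b}`). -/
theorem class2b_chsh_winning_probability :
    let ψ : Fin 2 × Fin 2 → ℂ := fun p =>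
      if p = (0, 1) then (Real.sin (Real.pi / 4) * Real.cos (Real.pi / 6) : ℂ)
      else if p = (1, 1) then (-(Real.sin (Real.pi / 4) * Real.sin (Real.pi / 6)) : ℂ)
      else if p = (1, 0) then (Real.cos (Real.pi / 4) : ℂ) else 0
    let A : Fin 2 → Matrix (Fin 2) (Fin 2) ℂ := fun x =>
      if x = 0 then σz else obs (Real.pi / 6)
    let B : Fin 2 → Matrix (Fin 2) (Fin 2) ℂ := fun y =>
      if y = 0 then σz else obs (Real.pi / 4)
    chshWin A B ψ = (13 / 16 : ℂ) := by
  intro ψ A B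
  change chshWin A B class2bState = 13 / 16
  simp only [chshWin_eq, A, B, one_ne_zero, ↓reduceIte, expval_one_class2bState,
    expval_σz_kronecker_σz_class2bState, expval_σz_kronecker_obs_pi_div_four_class2bState,
    expval_obs_pi_div_six_kronecker_σz_class2bState,
    expval_obs_pi_div_six_kronecker_obs_pi_div_four_class2bState]
  norm_num
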